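/- arXiv:2511.19003 — 2 statements merged into one kernel-verified Lean document; each statement's English description precedes it below -/
import Mathlib

section
/- For any real s, t with 0 ≤ s < 1 and any c > 0, the identity ∑_{a∈ℤ} e^{-(a-s)²/c + 2at} = √(πc) ∑_{ξ∈ℤ} e^{-2πiξs + 2ts + c(t-πiξ)²} holds, where both sides converge absolutely. -/
/-!
Completing the square, `e^{-(a-s)²/c + 2at} = e^{-s²/c} · e^{-π A a² + 2π B a}` with
`A = (πc)⁻¹` and `B = (s/c + t)/π`, and likewise each dual summand is
`e^{-s²/c} · e^{-(π/A)(ξ + iB)²}`.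
So the identity is `e^{-s²/c}` times Mathlib's Poisson summation for complex Gaussians
(`Complex.tsum_exp_neg_quadratic`), and `A^{-1/2} = √(πc)`. Summability comes from the terms of
the Jacobi theta function `θ(z, τ)` with `Im τ > 0`.
-/

open Real Complex

lemma Complex.summable_exp_neg_quadratic {a : ℂ} (ha : 0 < a.re) (b : ℂ) :
    Summable fun n : ℤ ↦ cexp (-π * a * n ^ 2 + 2 * π * b * n) := by
  refine ((summable_jacobiTheta₂_term_iff (-I * b) (I * a)).mpr (by simpa using ha)).congr
    fun n ↦ ?_
  rw [jacobiTheta₂_term]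
  congr 1
  ring_nf
  rw [I_sq]
  ring

lemma Complex.summable_exp_neg_quadratic_dual {a : ℂ} (ha : 0 < a.re) (b : ℂ) :
    Summable fun n : ℤ ↦ cexp (-π / a * (n + I * b) ^ 2) := by
  have ha0 : a ≠ 0 := fun h ↦ by simp [h] at ha
  have ha' : 0 < a⁻¹.re := by
    rw [inv_re]
    exact div_pos ha (normSq_pos.mpr ha0)
  refine ((summable_exp_neg_quadratic ha' (-I * b / a)).mul_left (cexp (π * b ^ 2 / a))).congr
    fun n ↦ ?_
  rw [← Complex.exp_add]
  congr 1
  field_simp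
  ring_nf
  rw [I_sq]
  ring

lemma one_div_ofReal_inv_cpow_half {x : ℝ} (hx : 0 ≤ x) :
    1 / ((x⁻¹ : ℝ) : ℂ) ^ (1 / 2 : ℂ) = (√x : ℂ) := by
  rw [show (1 / 2 : ℂ) = ((1 / 2 : ℝ) : ℂ) by norm_num, ← ofReal_cpow (inv_nonneg.mpr hx),
    Real.inv_rpow hx, ← Real.sqrt_eq_rpow, ofReal_inv, one_div, inv_inv]

section ShiftedGaussian

variable {s t c : ℝ}

lemma ofReal_exp_shifted_gaussian_eq (x : ℝ) :
    (rexp (-(x - s) ^ 2 / c + 2 * x * t) : ℂ) =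
      cexp (-s ^ 2 / c) *
        cexp (-π * ((π * c)⁻¹ : ℝ) * x ^ 2 + 2 * π * ((s / c + t) / π : ℝ) * x) := by
  rw [ofReal_exp, ← Complex.exp_add]
  congr 1
  push_cast
  field_simp
  ring

lemma exp_shifted_gaussian_dual_eq (hc : c ≠ 0) (ξ : ℂ) :
    cexp (-2 * π * I * ξ * s + 2 * t * s + c * (t - π * I * ξ) ^ 2) =
      cexp (-s ^ 2 / c) *
        cexp (-π / ((π * c)⁻¹ : ℝ) * (ξ + I * ((s / c + t) / π : ℝ)) ^ 2) := by
  have hc' : (c : ℂ) ≠ 0 := ofReal_ne_zero.mpr hc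
  have hπ : (π : ℂ) ≠ 0 := ofReal_ne_zero.mpr pi_ne_zero
  rw [← Complex.exp_add]
  congr 1
  push_cast
  field_simp
  ring_nf
  rw [I_sq]
  ring

end ShiftedGaussian

theorem poisson_summation_gaussian_general
    (s t c : ℝ) (hc : 0 < c) :
    Summable (fun a : ℤ => Real.exp (-((a : ℝ) - s) ^ 2 / c + 2 * a * t)) ∧
    Summable (fun ξ : ℤ => Complex.exp
      (-2 * Real.pi * Complex.I * ξ * s + 2 * t * s + c * (t - Real.pi * Complex.I * ξ) ^ 2)) ∧
    ((∑' a : ℤ, Real.exp (-((a : ℝ) - s) ^ 2 / c + 2 * a * t) : ℝ) : ℂ)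
      = (Real.sqrt (Real.pi * c) : ℂ) *
        ∑' ξ : ℤ, Complex.exp
          (-2 * Real.pi * Complex.I * ξ * s + 2 * t * s + c * (t - Real.pi * Complex.I * ξ) ^ 2) := by
  have hπc : 0 < π * c := mul_pos pi_pos hc
  have ha : 0 < (((π * c)⁻¹ : ℝ) : ℂ).re := by rw [ofReal_re]; positivity
  refine ⟨?_, ?_, ?_⟩
  · rw [← Complex.summable_ofReal]
    simp_rw [ofReal_exp_shifted_gaussian_eq, ofReal_intCast]
    exact (summable_exp_neg_quadratic ha _).mul_left _
  · simp_rw [exp_shifted_gaussian_dual_eq hc.ne']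
    exact (summable_exp_neg_quadratic_dual ha _).mul_left _
  · rw [ofReal_tsum]
    simp_rw [ofReal_exp_shifted_gaussian_eq, ofReal_intCast, exp_shifted_gaussian_dual_eq hc.ne',
      tsum_mul_left, tsum_exp_neg_quadratic ha, one_div_ofReal_inv_cpow_half hπc.le]
    ring

/-- Poisson summation for the Gaussian-type function `g(a) = e^{-(a-s)²/c + 2at}`:
for `0 ≤ s < 1` and `c > 0`,
`∑_{a∈ℤ} e^{-(a-s)²/c + 2at} = √(πc) ∑_{ξ∈ℤ} e^{-2πiξs + 2ts + c(t-πiξ)²}`,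
both sides converging absolutely. -/
theorem poisson_summation_gaussian
    (s t c : ℝ) (hs : 0 ≤ s) (hs1 : s < 1) (hc : 0 < c) :
    Summable (fun a : ℤ => Real.exp (-((a : ℝ) - s) ^ 2 / c + 2 * a * t)) ∧
    Summable (fun ξ : ℤ => Complex.exp
      (-2 * Real.pi * Complex.I * ξ * s + 2 * t * s + c * (t - Real.pi * Complex.I * ξ) ^ 2)) ∧
    ((∑' a : ℤ, Real.exp (-((a : ℝ) - s) ^ 2 / c + 2 * a * t) : ℝ) : ℂ)
      = (Real.sqrt (Real.pi * c) : ℂ) *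
        ∑' ξ : ℤ, Complex.exp
          (-2 * Real.pi * Complex.I * ξ * s + 2 * t * s + c * (t - Real.pi * Complex.I * ξ) ^ 2) :=
  poisson_summation_gaussian_general s t c hc
end

section
/- Let φ, φ' ∈ ℝ, λ ∈ ℤ, and c > 0. If ∑_{m≥1} e^{-c m²} cos(2πm(λt + φ')) = ∑_{m≥1} e^{-c m²} cos(2πm(λt + φ)) for all t ∈ [0,1], then φ' ≡ φ (mod 1) or (if λ = 0) cos(2πmφ') = cos(2πmφ) for all m ≥ 1, which forces φ' ≡ ±φ (mod 1); in the case λ ≠ 0, equality of the two absolutely convergent trigonometric series for all t implies e^{2πiφ'} = e^{2πiφ}. -/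
/-!
Multiplying the series by `cos (2πλt + α)` and integrating over the period `[0, 1]` termwise
(the series converges uniformly) kills every term except the first, whose product-to-sum expansion
has the constant part `e^{-c} cos (2πψ - α) / 2`. Equal series therefore give
`cos (2πφ' - α) = cos (2πφ - α)` for every `α`, i.e. `2πφ'` and `2πφ` have the same cosine and
sine. Without the series, `cos x = cos y` still gives `sin x = ± sin y`, so `e^{ix} = e^{± iy}`.
-/

open Real

theorem integral_cos_two_pi_int_mul_add (N : ℤ) (θ : ℝ) :
    ∫ t in (0 : ℝ)..1, cos (2 * π * N * t + θ) = if N = 0 then cos θ else 0 := by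
  split_ifs with hN
  · simp [hN]
  · have hN' : 2 * π * N ≠ 0 := by simp [pi_ne_zero, hN]
    rw [intervalIntegral.integral_comp_mul_add (fun x => cos x) hN', integral_cos,
      mul_one, mul_zero, zero_add, add_comm, mul_comm (2 * π), sin_add_int_mul_two_pi]
    simp

theorem integral_cos_mul_cos_two_pi_int_mul_add (N M : ℤ) (a b : ℝ) :
    ∫ t in (0 : ℝ)..1, cos (2 * π * N * t + a) * cos (2 * π * M * t + b) =
      ((if N = M then cos (a - b) else 0) + (if N + M = 0 then cos (a + b) else 0)) / 2 := by
  have h_prod (t : ℝ) : cos (2 * π * N * t + a) * cos (2 * π * M * t + b) =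
      (cos (2 * π * ↑(N - M) * t + (a - b)) + cos (2 * π * ↑(N + M) * t + (a + b))) / 2 := by
    rw [eq_div_iff two_ne_zero, mul_comm, ← mul_assoc, two_mul_cos_mul_cos]
    push_cast
    ring_nf
  simp_rw [h_prod]
  rw [intervalIntegral.integral_div, intervalIntegral.integral_add
      (by apply Continuous.intervalIntegrable; fun_prop)
      (by apply Continuous.intervalIntegrable; fun_prop),
    integral_cos_two_pi_int_mul_add, integral_cos_two_pi_int_mul_add]
  simp only [sub_eq_zero]

theorem summable_exp_neg_mul_succ_sq {c : ℝ} (hc : 0 < c) :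
    Summable fun m : ℕ => exp (-c * ((m : ℝ) + 1) ^ 2) := by
  have h_geom := summable_geometric_of_lt_one (exp_nonneg (-c)) (exp_lt_one_iff.mpr (by linarith))
  refine h_geom.of_nonneg_of_le (fun m => (exp_pos _).le) fun m => ?_
  rw [← exp_nat_mul, exp_le_exp]
  nlinarith [sq_nonneg (m : ℝ), Nat.cast_nonneg (α := ℝ) m]

noncomputable def cosSeries (a : ℕ → ℝ) (lam : ℤ) (ψ t : ℝ) : ℝ :=
  ∑' m : ℕ, a m * cos (2 * π * ((m : ℝ) + 1) * (lam * t + ψ))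

section cosSeries

variable {a : ℕ → ℝ} {lam : ℤ}

theorem hasSum_integral_cosSeries_mul_cos (ha : Summable fun m => |a m|) (ψ α : ℝ) :
    HasSum (fun m => ∫ t in (0 : ℝ)..1,
        a m * cos (2 * π * ((m : ℝ) + 1) * (lam * t + ψ)) * cos (2 * π * lam * t + α))
      (∫ t in (0 : ℝ)..1, cosSeries a lam ψ t * cos (2 * π * lam * t + α)) := by
  let f (m : ℕ) : C(ℝ, ℝ) :=
    ⟨fun t => a m * cos (2 * π * ((m : ℝ) + 1) * (lam * t + ψ)) * cos (2 * π * lam * t + α),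
      by fun_prop⟩
  have hf : Summable fun m =>
      ‖(f m).restrict (⟨Set.uIcc 0 1, isCompact_uIcc⟩ : TopologicalSpace.Compacts ℝ)‖ := by
    refine ha.of_nonneg_of_le (fun m => norm_nonneg _) fun m => ?_
    refine (ContinuousMap.norm_le _ (abs_nonneg _)).mpr fun t => ?_
    simp only [ContinuousMap.restrict_apply, f, ContinuousMap.coe_mk, norm_mul, norm_eq_abs]
    calc |a m| * |cos _| * |cos _| ≤ |a m| * 1 * 1 := by
          gcongr <;> exact abs_cos_le_one _
      _ = |a m| := by ring
  simpa only [f, ContinuousMap.coe_mk, cosSeries, tsum_mul_right] using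
    intervalIntegral.hasSum_intervalIntegral_of_summable_norm hf

theorem integral_cosSeries_mul_cos (ha : Summable fun m => |a m|) (hlam : lam ≠ 0) (ψ α : ℝ) :
    ∫ t in (0 : ℝ)..1, cosSeries a lam ψ t * cos (2 * π * lam * t + α) =
      a 0 * cos (2 * π * ψ - α) / 2 := by
  have hterm (m : ℕ) : ∫ t in (0 : ℝ)..1,
      a m * cos (2 * π * ((m : ℝ) + 1) * (lam * t + ψ)) * cos (2 * π * lam * t + α) =
        if m = 0 then a 0 * cos (2 * π * ψ - α) / 2 else 0 := by
    have h_phase (t : ℝ) : 2 * π * ((m : ℝ) + 1) * (lam * t + ψ) =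
        2 * π * ↑(((m : ℤ) + 1) * lam) * t + 2 * π * ((m : ℝ) + 1) * ψ := by
      push_cast; ring
    simp_rw [h_phase, mul_assoc (a m), intervalIntegral.integral_const_mul,
      integral_cos_mul_cos_two_pi_int_mul_add]
    rcases Nat.eq_zero_or_pos m with rfl | hm
    · simp [hlam, mul_div_assoc]
    · have hne : ((m : ℤ) + 1) * lam ≠ lam := by
        intro h; apply hlam; nlinarith
      have hne' : ((m : ℤ) + 1) * lam + lam ≠ 0 := by
        intro h; apply hlam; nlinarith
      simp [hne, hne', hm.ne']
  have h_sum := hasSum_integral_cosSeries_mul_cos (lam := lam) ha ψ α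
  rw [funext hterm] at h_sum
  exact h_sum.unique (hasSum_ite_eq 0 _)

theorem cos_sub_eq_of_cosSeries_eqOn (ha : Summable fun m => |a m|) (ha0 : a 0 ≠ 0)
    (hlam : lam ≠ 0) {φ φ' : ℝ}
    (h : ∀ t ∈ Set.Icc (0 : ℝ) 1, cosSeries a lam φ' t = cosSeries a lam φ t) (α : ℝ) :
    cos (2 * π * φ' - α) = cos (2 * π * φ - α) := by
  have h_int : ∫ t in (0 : ℝ)..1, cosSeries a lam φ' t * cos (2 * π * lam * t + α) =
      ∫ t in (0 : ℝ)..1, cosSeries a lam φ t * cos (2 * π * lam * t + α) :=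
    intervalIntegral.integral_congr fun t ht => by
      rw [Set.uIcc_of_le zero_le_one] at ht
      simp only [h t ht]
  rw [integral_cosSeries_mul_cos ha hlam, integral_cosSeries_mul_cos ha hlam] at h_int
  simpa [ha0] using h_int

end cosSeries

theorem Complex.exp_ofReal_mul_I_eq_of_cos_eq_of_sin_eq {x y : ℝ}
    (hcos : Real.cos x = Real.cos y) (hsin : Real.sin x = Real.sin y) :
    Complex.exp (x * Complex.I) = Complex.exp (y * Complex.I) := by
  rw [Complex.exp_mul_I, Complex.exp_mul_I, ← Complex.ofReal_cos, ← Complex.ofReal_sin,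
    ← Complex.ofReal_cos, ← Complex.ofReal_sin, hcos, hsin]

theorem Complex.exp_ofReal_mul_I_eq_or_eq_neg_of_cos_eq {x y : ℝ}
    (hcos : Real.cos x = Real.cos y) :
    Complex.exp (x * Complex.I) = Complex.exp (y * Complex.I) ∨
      Complex.exp (x * Complex.I) = Complex.exp (-(y * Complex.I)) := by
  have hsin : Real.sin x ^ 2 = Real.sin y ^ 2 := by rw [Real.sin_sq, Real.sin_sq, hcos]
  rcases sq_eq_sq_iff_eq_or_eq_neg.mp hsin with hsin | hsin
  · exact .inl (Complex.exp_ofReal_mul_I_eq_of_cos_eq_of_sin_eq hcos hsin)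
  · refine .inr ?_
    rw [← neg_mul, ← Complex.ofReal_neg]
    exact Complex.exp_ofReal_mul_I_eq_of_cos_eq_of_sin_eq (by rwa [Real.cos_neg])
      (by rwa [Real.sin_neg])

/-- Rigidity from equality of trigonometric series: if the absolutely convergent series
`∑_{m≥1} e^{-cm²} cos(2πm(λt+φ'))` and `∑_{m≥1} e^{-cm²} cos(2πm(λt+φ))` agree for all
`t ∈ [0,1]`, then: when `λ ≠ 0`, `e^{2πiφ'} = e^{2πiφ}`; when `λ = 0`, the condition
`cos(2πmφ') = cos(2πmφ)` for all `m ≥ 1` forces `φ' ≡ ±φ (mod 1)`. -/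
theorem trigonometric_series_rigidity
    (c : ℝ) (hc : 0 < c) (φ φ' : ℝ) (lam : ℤ)
    (h : ∀ t ∈ Set.Icc (0 : ℝ) 1,
      ∑' m : ℕ, Real.exp (-c * ((m : ℝ) + 1) ^ 2) *
          Real.cos (2 * Real.pi * ((m : ℝ) + 1) * ((lam : ℝ) * t + φ'))
        = ∑' m : ℕ, Real.exp (-c * ((m : ℝ) + 1) ^ 2) *
          Real.cos (2 * Real.pi * ((m : ℝ) + 1) * ((lam : ℝ) * t + φ))) :
    (lam ≠ 0 →
      Complex.exp (2 * Real.pi * Complex.I * φ') = Complex.exp (2 * Real.pi * Complex.I * φ)) ∧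
    ((∀ m : ℕ, 1 ≤ m → Real.cos (2 * Real.pi * (m : ℝ) * φ') = Real.cos (2 * Real.pi * (m : ℝ) * φ)) →
      (Complex.exp (2 * Real.pi * Complex.I * φ') = Complex.exp (2 * Real.pi * Complex.I * φ) ∨
       Complex.exp (2 * Real.pi * Complex.I * φ') = Complex.exp (-(2 * Real.pi * Complex.I * φ)))) := by
  have h_arg (ψ : ℝ) : 2 * π * Complex.I * ψ = ↑(2 * π * ψ) * Complex.I := by push_cast; ring
  simp only [h_arg]
  refine ⟨fun hlam => ?_, fun hcos => ?_⟩
  · have ha : Summable fun m : ℕ => |exp (-c * ((m : ℝ) + 1) ^ 2)| := by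
      simpa only [abs_exp] using summable_exp_neg_mul_succ_sq hc
    have h_shift := cos_sub_eq_of_cosSeries_eqOn ha (exp_pos _).ne' hlam h
    exact Complex.exp_ofReal_mul_I_eq_of_cos_eq_of_sin_eq (by simpa using h_shift 0)
      (by simpa only [cos_sub_pi_div_two] using h_shift (π / 2))
  · exact Complex.exp_ofReal_mul_I_eq_or_eq_neg_of_cos_eq (by simpa using hcos 1 le_rfl)
end
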